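/- In the BCK-algebra A given by Table 1, the BCK-sequences starting from x = 4 and y = 5 satisfy x_1 = 3, x_2 = 2, x_k = 1 for all k ≥ 3, y_1 = 2, and y_k = 2 for all k ≥ 2; in particular y_4 · x_3 = 1 ≠ 0, so these BCK-sequences cannot be prolonged. -/

import Mathlib

/-- The operation of Table 1 on `A = {0,1,2,3,4,5}`. -/
def tableA : Fin 6 → Fin 6 → Fin 6 :=
  ![![0,0,0,0,0,0],
    ![1,0,0,0,0,0],
    ![2,1,0,0,0,0],
    ![3,1,1,0,0,0],
    ![4,2,1,1,0,1],
    ![5,3,2,1,1,0]]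

/-- The pair of BCK-sequences `(x_k, y_k)` determined by starting elements
`x, y`:  `x_0 = x`, `y_0 = y`, `x_1 = y·(y·x)`, `y_1 = x·(x·y)`, and
`x_k = x_{k-2}·(x_{k-2}·x_{k-1})`, `y_k = y_{k-2}·(y_{k-2}·y_{k-1})` for `k ≥ 2`. -/
def bckPair {X : Type*} (op : X → X → X) (x y : X) : ℕ → X × X
  | 0 => (x, y)
  | 1 => (op y (op y x), op x (op x y))
  | k + 2 =>
      (op (bckPair op x y k).1 (op (bckPair op x y k).1 (bckPair op x y (k + 1)).1),
       op (bckPair op x y k).2 (op (bckPair op x y k).2 (bckPair op x y (k + 1)).2))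

/-!
The first four terms are read off Table 1. From there on `x_3 = x_4 = 1` and `y_3 = y_4 = 2`, and
a pair of equal consecutive terms `a, a` is followed by `a·(a·a) = a·0 = a`, so both sequences are
constant from `k = 3` on; `y_4 · x_3 = 2 · 1 = 1` is then the inequality that fails.
-/

section BCKSequences

variable {X : Type*} (op : X → X → X) (x y : X)

theorem bckPair_add_two (k : ℕ) :
    bckPair op x y (k + 2) =
      (op (bckPair op x y k).1 (op (bckPair op x y k).1 (bckPair op x y (k + 1)).1),
       op (bckPair op x y k).2 (op (bckPair op x y k).2 (bckPair op x y (k + 1)).2)) :=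
  rfl

theorem bckPair_eq_of_le {p : X × X} (hp₁ : op p.1 (op p.1 p.1) = p.1)
    (hp₂ : op p.2 (op p.2 p.2) = p.2) {k : ℕ} (hk : bckPair op x y k = p)
    (hk₁ : bckPair op x y (k + 1) = p) {m : ℕ} (hm : k ≤ m) : bckPair op x y m = p := by
  have hstep : ∀ n, bckPair op x y (k + n) = p ∧ bckPair op x y (k + n + 1) = p := by
    intro n
    induction n with
    | zero => exact ⟨hk, hk₁⟩
    | succ n ih =>
      refine ⟨ih.2, ?_⟩
      rw [show k + (n + 1) + 1 = k + n + 2 by omega, bckPair_add_two, ih.1, ih.2, hp₁, hp₂]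
  obtain ⟨n, rfl⟩ := Nat.exists_eq_add_of_le hm
  exact (hstep n).1

end BCKSequences

theorem bckPair_tableA_four_five_of_three_le (m : ℕ) (hm : 3 ≤ m) : bckPair tableA 4 5 m = (1, 2) :=
  bckPair_eq_of_le tableA 4 5 (by decide) (by decide) (k := 3) (by decide) (by decide) hm

theorem tableA_sequences_cannot_be_prolonged :
    (bckPair tableA 4 5 1).1 = 3 ∧
    (bckPair tableA 4 5 2).1 = 2 ∧
    (∀ k : ℕ, 3 ≤ k → (bckPair tableA 4 5 k).1 = 1) ∧
    (bckPair tableA 4 5 1).2 = 2 ∧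
    (∀ k : ℕ, 2 ≤ k → (bckPair tableA 4 5 k).2 = 2) ∧
    tableA (bckPair tableA 4 5 4).2 (bckPair tableA 4 5 3).1 = 1 ∧
    (1 : Fin 6) ≠ 0 ∧
    ¬ (∀ k : ℕ, tableA (bckPair tableA 4 5 (k + 1)).1 (bckPair tableA 4 5 k).2 = 0 ∧
        tableA (bckPair tableA 4 5 (k + 1)).2 (bckPair tableA 4 5 k).1 = 0) := by
  have hfail : tableA (bckPair tableA 4 5 4).2 (bckPair tableA 4 5 3).1 = 1 := by decide
  refine ⟨by decide, by decide, fun k hk => ?_, by decide, fun k hk => ?_, hfail, by decide, ?_⟩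
  · rw [bckPair_tableA_four_five_of_three_le k hk]
  · obtain rfl | hk := hk.eq_or_lt
    · decide
    · rw [bckPair_tableA_four_five_of_three_le k hk]
  · exact fun h => one_ne_zero (hfail.symm.trans (h 3).2)
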